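/- Let R > 0, k ≥ 1, β > 0, θ ∈ (0,1), B > 0. Suppose Φ : (0,R] → [0,∞) is bounded, and Ψ_i : (0,R] → [0,∞), i = 1,…,k, are decreasing functions satisfying Ψ_i(σ·t) ≤ σ^{−β·i}·Ψ_i(t) for all t ∈ (0,R] and all σ ∈ (0,1). If the inequality Φ(r) ≤ θ·Φ(s) + Σ_{i=1}^k Ψ_i(s−r) + B holds for all r, s ∈ (0,R] with r < s, then for every τ ∈ (0,1) there exists a constant C = C(θ, k, β, τ) > 0 such that Φ(τR) ≤ C·(Σ_{i=1}^k Ψ_i(R) + B). -/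

import Mathlib

/-!
Iterate the hypothesis along the radii `tₙ = R - Lⁿ (1 - τ) R`, which increase from `τ R` to `R`
with gaps `Lⁿ c R`, `c = (1 - L)(1 - τ)`. After `N` steps,
`Φ(τR) ≤ θᴺ sup Φ + ∑_{n<N} θⁿ (∑ᵢ Ψᵢ(Lⁿ c R) + B)`. The scaling of the `Ψᵢ` bounds
`θⁿ Ψᵢ(Lⁿ c R)` by `(θ L^{-βk})ⁿ c^{-βk} Ψᵢ(R)`, and `L < 1` is chosen so close to `1` that
`θ L^{-βk} < 1`; both series are then geometric, and the term `θᴺ sup Φ` vanishes as `N → ∞`.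
-/

open Finset Filter Topology

theorem le_of_le_mul_succ_add {f g : ℕ → ℝ} {θ K S : ℝ} (hθ0 : 0 ≤ θ) (hθ1 : θ < 1)
    (hK : ∀ n, f n ≤ K) (hstep : ∀ n, f n ≤ θ * f (n + 1) + g n)
    (hS : ∀ N, ∑ n ∈ range N, θ ^ n * g n ≤ S) : f 0 ≤ S := by
  have hiter : ∀ N, f 0 ≤ θ ^ N * f N + ∑ n ∈ range N, θ ^ n * g n := by
    intro N
    induction N with
    | zero => simp
    | succ N ih =>
      have h := mul_le_mul_of_nonneg_left (hstep N) (pow_nonneg hθ0 N)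
      rw [sum_range_succ]
      linarith [show θ ^ N * (θ * f (N + 1) + g N) = θ ^ (N + 1) * f (N + 1) + θ ^ N * g N by
        ring]
  have hlim : Tendsto (fun N => θ ^ N * K + S) atTop (𝓝 S) := by
    simpa using ((tendsto_pow_atTop_nhds_zero_of_lt_one hθ0 hθ1).mul_const K).add_const S
  refine ge_of_tendsto' hlim fun N => (hiter N).trans ?_
  linarith [hS N, mul_le_mul_of_nonneg_left (hK N) (pow_nonneg hθ0 N)]

theorem exists_mul_rpow_neg_lt_one {θ : ℝ} (hθ : θ < 1) (γ : ℝ) :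
    ∃ L ∈ Set.Ioo (0 : ℝ) 1, θ * L ^ (-γ) < 1 := by
  have hlim : Tendsto (fun L : ℝ => θ * L ^ (-γ)) (𝓝[<] 1) (𝓝 θ) := by
    simpa using ((Real.continuousAt_rpow_const 1 (-γ) (Or.inl one_ne_zero)).tendsto.const_mul
      θ).mono_left nhdsWithin_le_nhds
  obtain ⟨L, hLθ, hL⟩ :=
    ((hlim.eventually (gt_mem_nhds hθ)).and (Ioo_mem_nhdsLT (zero_lt_one' ℝ))).exists
  exact ⟨L, hL, hLθ⟩

theorem sum_apply_mul_le_rpow_neg_mul_sum {k : ℕ} {β σ t : ℝ} {Ψ : Fin k → ℝ → ℝ}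
    (hβ : 0 ≤ β) (hσ : σ ∈ Set.Ioc 0 1) (hΨ : ∀ i, 0 ≤ Ψ i t)
    (hscale : ∀ i, Ψ i (σ * t) ≤ σ ^ (-(β * ((i : ℕ) + 1))) * Ψ i t) :
    ∑ i, Ψ i (σ * t) ≤ σ ^ (-(β * k)) * ∑ i, Ψ i t := by
  rw [mul_sum]
  refine sum_le_sum fun i _ => (hscale i).trans (mul_le_mul_of_nonneg_right ?_ (hΨ i))
  have hik : ((i : ℕ) : ℝ) + 1 ≤ k := by exact_mod_cast i.isLt
  exact Real.rpow_le_rpow_of_exponent_ge hσ.1 hσ.2 (by nlinarith)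

theorem sum_range_pow_mul_le {g : ℕ → ℝ} {θ ρ a b : ℝ} (hθ : θ ∈ Set.Ico 0 1)
    (hρ : ρ ∈ Set.Ico 0 1) (ha : 0 ≤ a) (hb : 0 ≤ b)
    (hg : ∀ n, θ ^ n * g n ≤ ρ ^ n * a + θ ^ n * b) (N : ℕ) :
    ∑ n ∈ range N, θ ^ n * g n ≤ (1 - ρ)⁻¹ * a + (1 - θ)⁻¹ * b := by
  have geom : ∀ x : ℝ, x ∈ Set.Ico 0 1 → ∑ n ∈ range N, x ^ n ≤ (1 - x)⁻¹ := fun x hx => by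
    rw [range_eq_Ico]
    simpa using geom_sum_Ico_le_of_lt_one (m := 0) (n := N) hx.1 hx.2
  calc ∑ n ∈ range N, θ ^ n * g n
      ≤ (∑ n ∈ range N, ρ ^ n) * a + (∑ n ∈ range N, θ ^ n) * b := by
        rw [sum_mul, sum_mul, ← sum_add_distrib]
        exact sum_le_sum fun n _ => hg n
    _ ≤ (1 - ρ)⁻¹ * a + (1 - θ)⁻¹ * b := by
        gcongr
        exacts [geom ρ hρ, geom θ hθ]

theorem apply_mul_le_of_le_mul_apply_add {Φ F : ℝ → ℝ} {θ τ L R K S : ℝ}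
    (hθ : θ ∈ Set.Ico 0 1) (hτ : τ ∈ Set.Ioo 0 1) (hL : L ∈ Set.Ioo 0 1) (hR : 0 < R)
    (hK : ∀ t ∈ Set.Ioc 0 R, Φ t ≤ K)
    (hΦ : ∀ r ∈ Set.Ioc 0 R, ∀ s ∈ Set.Ioc 0 R, r < s → Φ r ≤ θ * Φ s + F (s - r))
    (hS : ∀ N, ∑ n ∈ range N, θ ^ n * F (L ^ n * ((1 - L) * (1 - τ)) * R) ≤ S) :
    Φ (τ * R) ≤ S := by
  obtain ⟨hτ0, hτ1⟩ := hτ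
  set t : ℕ → ℝ := fun n => R - L ^ n * (1 - τ) * R
  have hmem : ∀ n, t n ∈ Set.Ioc 0 R := fun n => by
    have hLn : L ^ n ≤ 1 := pow_le_one₀ hL.1.le hL.2.le
    have hLn0 : 0 < L ^ n := pow_pos hL.1 n
    constructor <;> nlinarith [mul_pos hLn0 hR]
  have hgap : ∀ n, t (n + 1) - t n = L ^ n * ((1 - L) * (1 - τ)) * R := fun n => by
    simp only [t, pow_succ]
    ring
  have hgap_pos : ∀ n, 0 < L ^ n * ((1 - L) * (1 - τ)) * R := fun n => by
    have := hL.1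
    have := sub_pos.2 hL.2
    have := sub_pos.2 hτ1
    positivity
  have ht0 : t 0 = τ * R := by
    simp only [t, pow_zero]
    ring
  rw [← ht0]
  refine le_of_le_mul_succ_add (f := fun n => Φ (t n)) hθ.1 hθ.2 (fun n => hK _ (hmem n))
    (fun n => ?_) hS
  have hstep := hΦ _ (hmem n) _ (hmem (n + 1)) (by linarith [hgap n, hgap_pos n])
  rwa [hgap n] at hstep

theorem sum_range_pow_mul_sum_add_le {k : ℕ} {Ψ : Fin k → ℝ → ℝ} {β θ L c R B : ℝ}
    (hβ : 0 ≤ β) (hθ : θ ∈ Set.Ico 0 1) (hL : L ∈ Set.Ioo 0 1) (hq : θ * L ^ (-(β * k)) < 1)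
    (hc : c ∈ Set.Ioo 0 1) (hB : 0 ≤ B) (hΨ : ∀ i, 0 ≤ Ψ i R)
    (hscale : ∀ i, ∀ σ ∈ Set.Ioo (0 : ℝ) 1, Ψ i (σ * R) ≤ σ ^ (-(β * ((i : ℕ) + 1))) * Ψ i R)
    (N : ℕ) :
    ∑ n ∈ range N, θ ^ n * (∑ i, Ψ i (L ^ n * c * R) + B) ≤
      (1 - θ * L ^ (-(β * k)))⁻¹ * (c ^ (-(β * k)) * ∑ i, Ψ i R) + (1 - θ)⁻¹ * B := by
  set γ := β * (k : ℝ)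
  obtain ⟨hL0, hL1⟩ := hL
  obtain ⟨hc0, hc1⟩ := hc
  have hθ0 := hθ.1
  refine sum_range_pow_mul_le hθ ⟨by positivity, hq⟩
    (mul_nonneg (by positivity) (sum_nonneg fun i _ => hΨ i)) hB (fun n => ?_) N
  have hσ : L ^ n * c ∈ Set.Ioo 0 1 := ⟨by positivity,
    mul_lt_one_of_nonneg_of_lt_one_right (pow_le_one₀ hL0.le hL1.le) hc0.le hc1⟩
  have hsum := sum_apply_mul_le_rpow_neg_mul_sum hβ (Set.Ioo_subset_Ioc_self hσ) hΨ
    (fun i => hscale i _ hσ)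
  have hpow : (L ^ n * c) ^ (-γ) = (L ^ (-γ)) ^ n * c ^ (-γ) := by
    rw [Real.mul_rpow (by positivity) hc0.le, ← Real.rpow_natCast L n,
      ← Real.rpow_mul hL0.le, mul_comm (n : ℝ), Real.rpow_mul hL0.le, Real.rpow_natCast]
  calc θ ^ n * (∑ i, Ψ i (L ^ n * c * R) + B)
      = θ ^ n * ∑ i, Ψ i (L ^ n * c * R) + θ ^ n * B := mul_add _ _ _
    _ ≤ θ ^ n * ((L ^ n * c) ^ (-γ) * ∑ i, Ψ i R) + θ ^ n * B := by gcongr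
    _ = (θ * L ^ (-γ)) ^ n * (c ^ (-γ) * ∑ i, Ψ i R) + θ ^ n * B := by
        rw [hpow, mul_pow]
        ring

theorem iteration_lemma_general (k : ℕ) (β θ τ : ℝ) (hβ : 0 < β)
    (hθ : θ ∈ Set.Ioo (0:ℝ) 1) (hτ : τ ∈ Set.Ioo (0:ℝ) 1) :
    ∃ C : ℝ, 0 < C ∧
      ∀ (R B : ℝ), 0 < R → 0 < B →
      ∀ Φ : ℝ → ℝ, (∀ t ∈ Set.Ioc 0 R, 0 ≤ Φ t) → (∃ K, ∀ t ∈ Set.Ioc 0 R, Φ t ≤ K) →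
      ∀ Ψ : Fin k → ℝ → ℝ,
        (∀ i, ∀ t ∈ Set.Ioc 0 R, 0 ≤ Ψ i t) →
        (∀ i, ∀ t ∈ Set.Ioc 0 R, ∀ s ∈ Set.Ioc 0 R, t ≤ s → Ψ i s ≤ Ψ i t) →
        (∀ i, ∀ t ∈ Set.Ioc 0 R, ∀ σ ∈ Set.Ioo (0:ℝ) 1,
          Ψ i (σ * t) ≤ σ ^ (-(β * ((i : ℕ) + 1))) * Ψ i t) →
        (∀ r ∈ Set.Ioc 0 R, ∀ s ∈ Set.Ioc 0 R, r < s →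
          Φ r ≤ θ * Φ s + (∑ i, Ψ i (s - r)) + B) →
        Φ (τ * R) ≤ C * ((∑ i, Ψ i R) + B) := by
  have hθ' : θ ∈ Set.Ico 0 1 := Set.Ioo_subset_Ico_self hθ
  obtain ⟨L, hL, hq⟩ := exists_mul_rpow_neg_lt_one hθ.2 (β * k)
  set c := (1 - L) * (1 - τ)
  have hc : c ∈ Set.Ioo 0 1 := ⟨mul_pos (sub_pos.2 hL.2) (sub_pos.2 hτ.2),
    mul_lt_one_of_nonneg_of_lt_one_left (sub_pos.2 hL.2).le (by linarith [hL.1])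
      (by linarith [hτ.1])⟩
  set A := c ^ (-(β * k)) * (1 - θ * L ^ (-(β * k)))⁻¹
  have hA : 0 < A := mul_pos (Real.rpow_pos_of_pos hc.1 _) (inv_pos.2 (sub_pos.2 hq))
  have hθinv : 0 < (1 - θ)⁻¹ := inv_pos.2 (sub_pos.2 hθ.2)
  refine ⟨A + (1 - θ)⁻¹, add_pos hA hθinv, ?_⟩
  intro R B hR hB Φ _ ⟨K, hK⟩ Ψ hΨ0 _ hΨscale hΦ
  have hRR : R ∈ Set.Ioc 0 R := ⟨hR, le_rfl⟩
  have hS : 0 ≤ ∑ i, Ψ i R := sum_nonneg fun i _ => hΨ0 i R hRR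
  have hΦτ := apply_mul_le_of_le_mul_apply_add (F := fun s => ∑ i, Ψ i s + B) hθ' hτ hL hR hK
    (fun r hr s hs hrs => (hΦ r hr s hs hrs).trans_eq (add_assoc _ _ _))
    (sum_range_pow_mul_sum_add_le hβ.le hθ' hL hq hc hB.le (fun i => hΨ0 i R hRR)
      (fun i => hΨscale i R hRR))
  calc Φ (τ * R)
      ≤ (1 - θ * L ^ (-(β * k)))⁻¹ * (c ^ (-(β * k)) * ∑ i, Ψ i R) + (1 - θ)⁻¹ * B := hΦτ
    _ ≤ (A + (1 - θ)⁻¹) * ((∑ i, Ψ i R) + B) := by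
        nlinarith [mul_nonneg hA.le hB.le, mul_nonneg hθinv.le hS]

/-- Lemma 2.4 (iteration lemma): let `θ ∈ (0,1)`, `β > 0`, `k ≥ 1`, `τ ∈ (0,1)`. There is a
constant `C = C(θ, k, β, τ) > 0` such that for every `R > 0`, `B > 0`, every bounded
`Φ : (0,R] → ℝ₊` and all decreasing `Ψᵢ : (0,R] → ℝ₊` (`i = 1, …, k`) satisfying
`Ψᵢ(σ t) ≤ σ^{-β i} Ψᵢ(t)` for `t ∈ (0,R]`, `σ ∈ (0,1)`: if
`Φ(r) ≤ θ Φ(s) + ∑ᵢ Ψᵢ(s-r) + B` for all `0 < r < s ≤ R`, then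
`Φ(τ R) ≤ C (∑ᵢ Ψᵢ(R) + B)`. -/
theorem iteration_lemma (k : ℕ) (hk : 1 ≤ k) (β θ τ : ℝ) (hβ : 0 < β)
    (hθ : θ ∈ Set.Ioo (0:ℝ) 1) (hτ : τ ∈ Set.Ioo (0:ℝ) 1) :
    ∃ C : ℝ, 0 < C ∧
      ∀ (R B : ℝ), 0 < R → 0 < B →
      ∀ Φ : ℝ → ℝ, (∀ t ∈ Set.Ioc 0 R, 0 ≤ Φ t) → (∃ K, ∀ t ∈ Set.Ioc 0 R, Φ t ≤ K) →
      ∀ Ψ : Fin k → ℝ → ℝ,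
        (∀ i, ∀ t ∈ Set.Ioc 0 R, 0 ≤ Ψ i t) →
        (∀ i, ∀ t ∈ Set.Ioc 0 R, ∀ s ∈ Set.Ioc 0 R, t ≤ s → Ψ i s ≤ Ψ i t) →
        (∀ i, ∀ t ∈ Set.Ioc 0 R, ∀ σ ∈ Set.Ioo (0:ℝ) 1,
          Ψ i (σ * t) ≤ σ ^ (-(β * ((i : ℕ) + 1))) * Ψ i t) →
        (∀ r ∈ Set.Ioc 0 R, ∀ s ∈ Set.Ioc 0 R, r < s →
          Φ r ≤ θ * Φ s + (∑ i, Ψ i (s - r)) + B) →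
        Φ (τ * R) ≤ C * ((∑ i, Ψ i R) + B) :=
  iteration_lemma_general k β θ τ hβ hθ hτ
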